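/- Let θ_T ∈ Θ_e and θ ∈ Θ_e, and suppose that for λ-a.e. (u₁,u₂) the values 1/c_θ(u₁,u₂) and 1/c_{θ_T}(u₁,u₂) lie in the interior of the domain of φ, and that all the integrals below are finite. Then ∫_I m(θ,u₁,u₂) dC_{θ_T}(u₁,u₂) ≤ D_φ(θ₀,θ_T), with equality for θ = θ_T; hence D_φ(θ₀,θ_T) = sup_{θ ∈ Θ_e} ∫_I m(θ,u₁,u₂) dC_{θ_T}(u₁,u₂) and the supremum is attained at θ = θ_T. If moreover φ is strictly convex on the interior of its domain, then equality holds for a given θ if and only if c_θ = c_{θ_T} λ-almost everywhere on I. -/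

import Mathlib

open MeasureTheory ProbabilityTheory Filter Set Asymptotics
open scoped Topology ENNReal NNReal

noncomputable section

namespace Copula

/-- The unit square `I = [0,1]²`. -/
def Isq : Set (ℝ × ℝ) := Icc (0:ℝ) 1 ×ˢ Icc (0:ℝ) 1

/-- The open unit square `(0,1)²`. -/
def IsqO : Set (ℝ × ℝ) := Ioo (0:ℝ) 1 ×ˢ Ioo (0:ℝ) 1

variable {d : ℕ}

/-- Partial derivative in the `ℓ`-th θ-coordinate. -/
def pdθ (f : (Fin d → ℝ) → ℝ) (ℓ : Fin d) (θ : Fin d → ℝ) : ℝ :=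
  deriv (fun t => f (Function.update θ ℓ t)) (θ ℓ)

/-- Second partial derivative in θ-coordinates `ℓ, ℓ'`. -/
def pdθ2 (f : (Fin d → ℝ) → ℝ) (ℓ ℓ' : Fin d) (θ : Fin d → ℝ) : ℝ :=
  pdθ (pdθ f ℓ') ℓ θ

/-- Third partial derivative in θ-coordinates. -/
def pdθ3 (f : (Fin d → ℝ) → ℝ) (ℓ ℓ' ℓ'' : Fin d) (θ : Fin d → ℝ) : ℝ :=
  pdθ (pdθ (pdθ f ℓ'') ℓ') ℓ θ

/-- Partial derivative in the first `u`-coordinate. -/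
def pdU1 (f : ℝ × ℝ → ℝ) (u : ℝ × ℝ) : ℝ := deriv (fun t => f (t, u.2)) u.1

/-- Partial derivative in the second `u`-coordinate. -/
def pdU2 (f : ℝ × ℝ → ℝ) (u : ℝ × ℝ) : ℝ := deriv (fun t => f (u.1, t)) u.2

variable (φ : ℝ → ℝ) (c : (Fin d → ℝ) → ℝ × ℝ → ℝ)

/-- `K₁(θ,u) = φ'(1/c_θ(u))`. -/
def K1 (θ : Fin d → ℝ) (u : ℝ × ℝ) : ℝ := deriv φ (1 / c θ u)

/-- `K₂(θ,u) = φ'(1/c_θ(u))/c_θ(u) - φ(1/c_θ(u))`. -/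
def K2 (θ : Fin d → ℝ) (u : ℝ × ℝ) : ℝ :=
  deriv φ (1 / c θ u) / c θ u - φ (1 / c θ u)

/-- The dual criterion `m(θ,u) = ∫_I φ'(1/c_θ) dλ - K₂(θ,u)`. -/
def mFun (θ : Fin d → ℝ) (u : ℝ × ℝ) : ℝ :=
  (∫ v in Isq, K1 φ c θ v) - K2 φ c θ u

/-- The enlarged parameter space `Θ_e`. -/
def ThetaE : Set (Fin d → ℝ) :=
  {θ | IntegrableOn (fun v => |K1 φ c θ v|) Isq volume}

/-- The c.d.f. `C_θ(u) = ∫_{[0,u₁]×[0,u₂]} c_θ dλ` of the copula with density `c_θ`. -/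
def copCdf (θ : Fin d → ℝ) (u : ℝ × ℝ) : ℝ :=
  ∫ v in Icc (0:ℝ) u.1 ×ˢ Icc (0:ℝ) u.2, c θ v

/-- Integral against the copula measure `dC_θ = c_θ dλ` on `I`. -/
def intC (θ : Fin d → ℝ) (f : ℝ × ℝ → ℝ) : ℝ := ∫ u in Isq, f u * c θ u

/-- The matrix `-∫_I (∂²/∂θ²) m(θ_T,·) dC_{θ_T}` (as a function of indices). -/
def SmatFun (θT : Fin d → ℝ) (ℓ ℓ' : Fin d) : ℝ :=
  -∫ u in Isq, pdθ2 (fun θ => mFun φ c θ u) ℓ ℓ' θT * c θT u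

/-- The matrix `S` of Theorem 1. -/
def Smat (θT : Fin d → ℝ) : Matrix (Fin d) (Fin d) ℝ := Matrix.of (SmatFun φ c θT)

section Empirical

variable {Ω : Type*} [MeasurableSpace Ω] (X : ℕ → Ω → ℝ × ℝ)

/-- Empirical marginal distribution function of the first coordinate. -/
def empF1 (n : ℕ) (ω : Ω) (t : ℝ) : ℝ :=
  (n : ℝ)⁻¹ * ∑ k ∈ Finset.range n, if (X k ω).1 ≤ t then 1 else 0

/-- Empirical marginal distribution function of the second coordinate. -/
def empF2 (n : ℕ) (ω : Ω) (t : ℝ) : ℝ :=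
  (n : ℝ)⁻¹ * ∑ k ∈ Finset.range n, if (X k ω).2 ≤ t then 1 else 0

/-- The pseudo-observations `(F_{1n}(X_{1k}), F_{2n}(X_{2k}))`. -/
def pseudoObs (n : ℕ) (ω : Ω) (k : ℕ) : ℝ × ℝ :=
  (empF1 X n ω (X k ω).1, empF2 X n ω (X k ω).2)

/-- Integral `∫_I f dC_n` against the (modified) empirical copula `C_n`, i.e. the
average of `f` over the pseudo-observations. -/
def intCn (f : ℝ × ℝ → ℝ) (n : ℕ) (ω : Ω) : ℝ :=
  (n : ℝ)⁻¹ * ∑ k ∈ Finset.range n, f (pseudoObs X n ω k)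

/-- The (modified) empirical copula `C_n`. -/
def empCop (n : ℕ) (ω : Ω) (u : ℝ × ℝ) : ℝ :=
  (n : ℝ)⁻¹ * ∑ k ∈ Finset.range n,
    if (pseudoObs X n ω k).1 ≤ u.1 ∧ (pseudoObs X n ω k).2 ≤ u.2 then 1 else 0


/-- The true copula of the sample: `C(u) = P(F₁(X₁) ≤ u₁, F₂(X₂) ≤ u₂)`. -/
def copOf (P : Measure Ω) (F1 F2 : ℝ → ℝ) (u : ℝ × ℝ) : ℝ :=
  (P {ω | F1 (X 0 ω).1 ≤ u.1 ∧ F2 (X 0 ω).2 ≤ u.2}).toReal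

/-- Integral `∫_I j dC` of `j` against the true copula of the sample. -/
def intCop (P : Measure Ω) (F1 F2 : ℝ → ℝ) (j : ℝ × ℝ → ℝ) : ℝ :=
  ∫ ω, j (F1 (X 0 ω).1, F2 (X 0 ω).2) ∂P

/-- The joint empirical distribution function `F_n`. -/
def empJoint (n : ℕ) (ω : Ω) (x : ℝ × ℝ) : ℝ :=
  (n : ℝ)⁻¹ * ∑ k ∈ Finset.range n, if (X k ω).1 ≤ x.1 ∧ (X k ω).2 ≤ x.2 then 1 else 0

/-- Empirical quantile function of the first margin. -/
def empQuant1 (n : ℕ) (ω : Ω) (t : ℝ) : ℝ := sInf {x : ℝ | t ≤ empF1 X n ω x}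

/-- Empirical quantile function of the second margin. -/
def empQuant2 (n : ℕ) (ω : Ω) (t : ℝ) : ℝ := sInf {x : ℝ | t ≤ empF2 X n ω x}

/-- The Deheuvels empirical copula `𝔻_n(u) = F_n(F_{1n}⁻¹(u₁), F_{2n}⁻¹(u₂))`. -/
def deheuvelsCop (n : ℕ) (ω : Ω) (u : ℝ × ℝ) : ℝ :=
  empJoint X n ω (empQuant1 X n ω u.1, empQuant2 X n ω u.2)

/-- The influence function of Theorem 1(2): `(∂/∂θ)m(θ_T,F₁(X₁),F₂(X₂)) + W₁ + W₂`. -/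
def gVec (θT : Fin d → ℝ) (F1 F2 : ℝ → ℝ) (ω : Ω) (ℓ : Fin d) : ℝ :=
  pdθ (fun θ => mFun φ c θ (F1 (X 0 ω).1, F2 (X 0 ω).2)) ℓ θT +
    (∫ u in Isq, (if F1 (X 0 ω).1 ≤ u.1 then (1:ℝ) else 0) *
      pdU1 (fun v => pdθ (fun θ => mFun φ c θ v) ℓ θT) u * c θT u) +
    (∫ u in Isq, (if F2 (X 0 ω).2 ≤ u.2 then (1:ℝ) else 0) *
      pdU2 (fun v => pdθ (fun θ => mFun φ c θ v) ℓ θT) u * c θT u)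

/-- The covariance matrix `M` of Theorem 1(2) (as a function of indices). -/
def MmatFun (P : Measure Ω) (θT : Fin d → ℝ) (F1 F2 : ℝ → ℝ) (ℓ ℓ' : Fin d) : ℝ :=
  ∫ ω, (gVec φ c X θT F1 F2 ω ℓ - ∫ ω', gVec φ c X θT F1 F2 ω' ℓ ∂P) *
    (gVec φ c X θT F1 F2 ω ℓ' - ∫ ω', gVec φ c X θT F1 F2 ω' ℓ' ∂P) ∂P

/-- The influence function of Theorem 2(2): `m(θ_T,F₁(X₁),F₂(X₂)) + Y₁ + Y₂`. -/
def mInf (θT : Fin d → ℝ) (F1 F2 : ℝ → ℝ) (ω : Ω) : ℝ :=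
  mFun φ c θT (F1 (X 0 ω).1, F2 (X 0 ω).2) +
    (∫ u in Isq, (if F1 (X 0 ω).1 ≤ u.1 then (1:ℝ) else 0) * pdU1 (mFun φ c θT) u * c θT u) +
    (∫ u in Isq, (if F2 (X 0 ω).2 ≤ u.2 then (1:ℝ) else 0) * pdU2 (mFun φ c θT) u * c θT u)

/-- The estimator `D̂_φ(θ₀,θ_T) = sup_{θ ∈ Θ_e} ∫_I m(θ,·) dC_n`. -/
def Dhat (n : ℕ) (ω : Ω) : ℝ :=
  sSup ((fun θ : Fin d → ℝ => intCn X (mFun φ c θ) n ω) '' ThetaE φ c)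

end Empirical

/-- Convergence in distribution (weak convergence of the laws) of a sequence of
random elements to the law `ν`. -/
def ConvInDist {Ω E : Type*} [MeasurableSpace Ω] [MeasurableSpace E] [TopologicalSpace E]
    (P : Measure Ω) (Y : ℕ → Ω → E) (ν : Measure E) : Prop :=
  ∀ f : BoundedContinuousFunction E ℝ,
    Tendsto (fun n => ∫ ω, f (Y n ω) ∂P) atTop (𝓝 (∫ x, f x ∂ν))

/-- `ν` is the centered Gaussian law on `ℝ^d` with covariance matrix `Σ`:
every linear functional is one-dimensional centered Gaussian with the induced variance. -/
def IsCenteredGaussianCov (ν : Measure (Fin d → ℝ)) (Cov : Fin d → Fin d → ℝ) : Prop :=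
  IsProbabilityMeasure ν ∧
    ∀ a : Fin d → ℝ,
      ν.map (fun x => ∑ i, a i * x i) =
        gaussianReal 0 (Real.toNNReal (∑ i, ∑ j, a i * Cov i j * a j))

/-- The chi-squared law with `k` degrees of freedom, defined through its density. -/
def chiSqMeasure (k : ℕ) : Measure ℝ :=
  (volume.restrict (Ioi (0:ℝ))).withDensity fun x =>
    ENNReal.ofReal
      (x ^ ((k : ℝ) / 2 - 1) * Real.exp (-x / 2) /
        (2 ^ ((k : ℝ) / 2) * Real.Gamma ((k : ℝ) / 2)))

/-- A u-shaped function on `(0,1)`. -/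
def UShaped (r : ℝ → ℝ) : Prop :=
  (∀ t ∈ Ioo (0:ℝ) 1, 0 < r t) ∧ (∀ t ∈ Ioo (0:ℝ) 1, r (1 - t) = r t) ∧
    MonotoneOn r (Ioc (0:ℝ) (1/2))

/-- `r_β` for a u-shaped `r`. -/
def rBeta (r : ℝ → ℝ) (β t : ℝ) : ℝ :=
  if t ≤ 1/2 then r (β * t) else r (1 - β * (1 - t))

/-- Reproducing u-shaped functions: the class `R`. -/
def Reproducing (r : ℝ → ℝ) : Prop :=
  UShaped r ∧ ∃ β₀ > (0:ℝ), ∀ β ∈ Ioo (0:ℝ) β₀, ∃ M : ℝ,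
    ∀ t ∈ Ioo (0:ℝ) 1, rBeta r β t ≤ M * r t

/-- The class `Q`. -/
def ClassQ (q : ℝ → ℝ) : Prop :=
  ContinuousOn q (Icc 0 1) ∧ (∀ t ∈ Ioo (0:ℝ) 1, 0 < q t) ∧
    (∀ t ∈ Icc (0:ℝ) 1, q (1 - t) = q t) ∧ MonotoneOn q (Icc (0:ℝ) (1/2)) ∧
    IntegrableOn (fun t => ((q t) ^ 2)⁻¹) (Icc (0:ℝ) 1) volume

/-- Condition (C.1): on a neighborhood of `θ_T` contained in `Θ_e`, the maps
`θ ↦ φ'(1/c_θ(u))` are twice differentiable in each θ-coordinate and the first and second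
partial derivatives are dominated by λ-integrable functions. -/
def CondC1 (θT : Fin d → ℝ) : Prop :=
  ∃ N ∈ 𝓝 θT, N ⊆ ThetaE φ c ∧
    (∀ u ∈ Isq, ∀ θ ∈ N, ∀ ℓ : Fin d,
      DifferentiableAt ℝ (fun t => K1 φ c (Function.update θ ℓ t) u) (θ ℓ) ∧
      ∀ ℓ' : Fin d,
        DifferentiableAt ℝ
          (fun t => pdθ (fun θ' => K1 φ c θ' u) ℓ' (Function.update θ ℓ t)) (θ ℓ)) ∧
    ∃ g1 g2 : ℝ × ℝ → ℝ, IntegrableOn g1 Isq volume ∧ IntegrableOn g2 Isq volume ∧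
      ∀ θ ∈ N, ∀ u ∈ Isq, ∀ ℓ ℓ' : Fin d,
        |pdθ (fun θ' => K1 φ c θ' u) ℓ θ| ≤ g1 u ∧
        |pdθ2 (fun θ' => K1 φ c θ' u) ℓ ℓ' θ| ≤ g2 u

/-- Condition (C.2). -/
def CondC2 (θT : Fin d → ℝ) : Prop :=
  ∃ N ∈ 𝓝 θT, ∃ r1 r2 rt1 rt2 q1 q2 : ℝ → ℝ,
    Reproducing r1 ∧ Reproducing r2 ∧ Reproducing rt1 ∧ Reproducing rt2 ∧
    ClassQ q1 ∧ ClassQ q2 ∧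
    (∀ θ ∈ N, ∀ ℓ : Fin d,
      ContDiffOn ℝ 1 (fun u => pdθ (fun θ' => mFun φ c θ' u) ℓ θ) IsqO) ∧
    (∀ θ ∈ N, ∀ u ∈ IsqO,
      -- (i) |∂m/∂θ_ℓ| ≤ r₁(u₁)r₂(u₂) and |∂²m/∂θ_ℓ∂u_i| ≤ r̃_i(u_i)r_j(u_j)
      (∀ ℓ : Fin d,
        |pdθ (fun θ' => mFun φ c θ' u) ℓ θ| ≤ r1 u.1 * r2 u.2 ∧
        |pdU1 (fun v => pdθ (fun θ' => mFun φ c θ' v) ℓ θ) u| ≤ rt1 u.1 * r2 u.2 ∧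
        |pdU2 (fun v => pdθ (fun θ' => mFun φ c θ' v) ℓ θ) u| ≤ rt2 u.2 * r1 u.1) ∧
      -- (ii) m² and (iv) |m|
      ((mFun φ c θ u) ^ 2 ≤ rt1 u.1 * r2 u.2 ∧ (mFun φ c θ u) ^ 2 ≤ rt2 u.2 * r1 u.1) ∧
      (|mFun φ c θ u| ≤ rt1 u.1 * r2 u.2 ∧ |mFun φ c θ u| ≤ rt2 u.2 * r1 u.1) ∧
      -- (iii) third θ-derivatives of K₂
      (∀ ℓ ℓ' ℓ'' : Fin d,
        |pdθ3 (fun θ' => K2 φ c θ' u) ℓ ℓ' ℓ'' θ| ≤ rt1 u.1 * r2 u.2 ∧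
        |pdθ3 (fun θ' => K2 φ c θ' u) ℓ ℓ' ℓ'' θ| ≤ rt2 u.2 * r1 u.1) ∧
      -- (v) |∂m/∂θ_ℓ|² and |∂²m/∂θ_ℓ∂θ_ℓ'|
      (∀ ℓ ℓ' : Fin d,
        ((pdθ (fun θ' => mFun φ c θ' u) ℓ θ) ^ 2 ≤ rt1 u.1 * r2 u.2 ∧
          (pdθ (fun θ' => mFun φ c θ' u) ℓ θ) ^ 2 ≤ rt2 u.2 * r1 u.1) ∧
        (|pdθ2 (fun θ' => mFun φ c θ' u) ℓ ℓ' θ| ≤ rt1 u.1 * r2 u.2 ∧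
          |pdθ2 (fun θ' => mFun φ c θ' u) ℓ ℓ' θ| ≤ rt2 u.2 * r1 u.1)) ∧
      -- (vi) |∂m/∂u_i|
      (|pdU1 (mFun φ c θ) u| ≤ rt1 u.1 * r2 u.2 ∧
        |pdU2 (mFun φ c θ) u| ≤ rt2 u.2 * r1 u.1)) ∧
    IntegrableOn (fun u => (r1 u.1 * r2 u.2) ^ 2 * c θT u) Isq volume ∧
    IntegrableOn (fun u => q1 u.1 * rt1 u.1 * r2 u.2 * c θT u) Isq volume ∧
    IntegrableOn (fun u => q2 u.2 * rt2 u.2 * r1 u.1 * c θT u) Isq volume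

/-- Condition (C.3): nonsingularity of `∫_I (∂²/∂θ²)m(θ_T,·) dC_{θ_T}`. -/
def CondC3 (θT : Fin d → ℝ) : Prop := (Smat φ c θT).det ≠ 0

/-- A continuous function on `I` of bounded variation in the Hardy–Krause sense:
it induces a finite signed Borel measure on `I` and its edge restrictions are of
bounded variation. -/
def HKBV (j : ℝ × ℝ → ℝ) : Prop :=
  (∃ μ : SignedMeasure (ℝ × ℝ),
    ∀ u ∈ Isq, j u = j (u.1, 0) + j (0, u.2) - j (0, 0) +
      μ (Ioc (0:ℝ) u.1 ×ˢ Ioc (0:ℝ) u.2)) ∧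
  BoundedVariationOn (fun t => j (t, 1)) (Icc (0:ℝ) 1) ∧
  BoundedVariationOn (fun t => j (1, t)) (Icc (0:ℝ) 1)

/-- Condition (C.4): each component of `(∂/∂θ)m(θ_T,·)` is continuous and of bounded
variation on `I`. -/
def CondC4 (θT : Fin d → ℝ) : Prop :=
  ∀ ℓ : Fin d,
    ContinuousOn (fun u => pdθ (fun θ => mFun φ c θ u) ℓ θT) Isq ∧
    HKBV (fun u => pdθ (fun θ => mFun φ c θ u) ℓ θT)

/-- Condition (C.5). -/
def CondC5 (θ0 θT : Fin d → ℝ) : Prop :=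
  (∀ ℓ : Fin d, ∀ u ∈ IsqO,
    Tendsto (fun θ => pdU1 (fun v => pdθ (fun θ' => mFun φ c θ' v) ℓ θ) u)
      (𝓝 θ0) (𝓝 0) ∧
    Tendsto (fun θ => pdU2 (fun v => pdθ (fun θ' => mFun φ c θ' v) ℓ θ) u)
      (𝓝 θ0) (𝓝 0)) ∧
  ∃ M1 > (0:ℝ), ∃ δ1 > (0:ℝ), ∃ N ∈ 𝓝 θ0, ∀ θ ∈ N, ∀ u ∈ IsqO, ∀ ℓ : Fin d,
    |pdU1 (fun v => pdθ (fun θ' => mFun φ c θ' v) ℓ θ) u * c θT u| <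
      M1 * (u.1 * (1 - u.1)) ^ (-1.5 + δ1 : ℝ) * (u.2 * (1 - u.2)) ^ (0.5 + δ1 : ℝ) ∧
    |pdU2 (fun v => pdθ (fun θ' => mFun φ c θ' v) ℓ θ) u * c θT u| <
      M1 * (u.2 * (1 - u.2)) ^ (-1.5 + δ1 : ℝ) * (u.1 * (1 - u.1)) ^ (0.5 + δ1 : ℝ)

end Copula

/-!
Write `x = 1/c_θ(u)` and `y = 1/c_{θ_T}(u)`. Since `∫_I c_{θ_T} dλ = 1`, the gap
`D_φ(θ₀,θ_T) - ∫_I m(θ,·) dC_{θ_T}` is the `C_{θ_T}`-mean of the Bregman divergence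
`φ(y) - φ(x) - φ'(x)(y - x)`, which is nonnegative by convexity, vanishes for `x = y`, and under
strict convexity only there.
-/
section Bregman

def bregmanDiv (f : ℝ → ℝ) (x y : ℝ) : ℝ := f y - f x - deriv f x * (y - x)

variable {f : ℝ → ℝ} {S : Set ℝ} {x y : ℝ}

@[simp]
lemma bregmanDiv_self (f : ℝ → ℝ) (x : ℝ) : bregmanDiv f x x = 0 := by
  simp [bregmanDiv]

lemma ConvexOn.bregmanDiv_nonneg (hf : ConvexOn ℝ S f) (hx : x ∈ S) (hy : y ∈ S)
    (hfx : DifferentiableAt ℝ f x) : 0 ≤ bregmanDiv f x y := by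
  unfold bregmanDiv
  rcases lt_trichotomy x y with hxy | rfl | hxy
  · have h := hf.deriv_le_slope hx hy hxy hfx
    rw [slope_def_field, le_div_iff₀ (sub_pos.mpr hxy)] at h
    linarith
  · simp
  · have h := hf.slope_le_deriv hy hx hxy hfx
    rw [slope_def_field, div_le_iff₀ (sub_pos.mpr hxy)] at h
    linarith

lemma StrictConvexOn.bregmanDiv_pos (hf : StrictConvexOn ℝ S f) (hx : x ∈ S) (hy : y ∈ S)
    (hxy : x ≠ y) (hfx : DifferentiableAt ℝ f x) : 0 < bregmanDiv f x y := by
  unfold bregmanDiv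
  rcases hxy.lt_or_gt with hxy | hxy
  · have h := hf.deriv_lt_slope hx hy hxy hfx
    rw [slope_def_field, lt_div_iff₀ (sub_pos.mpr hxy)] at h
    linarith
  · have h := hf.slope_lt_deriv hy hx hxy hfx
    rw [slope_def_field, div_lt_iff₀ (sub_pos.mpr hxy)] at h
    linarith

/-- On `(0, ∞)` the derivative of a convex function is a nondecreasing function of
`t ↦ f' t * t - f t`. -/
lemma deriv_le_deriv_of_legendre_le {t : ℝ} (hB : 0 ≤ bregmanDiv f t x) (hx : 0 < x)
    (h : deriv f t * t - f t ≤ deriv f x * x - f x) : deriv f t ≤ deriv f x := by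
  unfold bregmanDiv at hB
  exact le_of_mul_le_mul_right (by linarith) hx

end Bregman

lemma aemeasurable_of_le_imp_le {α : Type*} [MeasurableSpace α] {μ : Measure α}
    {f h : α → ℝ} {s : Set α} (hs : ∀ᵐ a ∂μ, a ∈ s) (hh : AEMeasurable h μ)
    (hfh : ∀ a ∈ s, ∀ b ∈ s, h a ≤ h b → f a ≤ f b) : AEMeasurable f μ := by
  -- `f = g ∘ h` on `s`; in `ℝ`, suprema of unbounded sets would take the junk value `0`
  set g : ℝ → EReal := fun y => ⨆ a ∈ {a ∈ s | h a ≤ y}, (f a : EReal)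
  have hg : Monotone g := fun y z hyz =>
    biSup_mono fun a ha => ⟨ha.1, ha.2.trans hyz⟩
  have hgh : ∀ b ∈ s, g (h b) = f b := fun b hb =>
    le_antisymm (iSup₂_le fun a ha => EReal.coe_le_coe_iff.mpr (hfh a ha.1 b hb ha.2))
      (le_iSup₂_of_le b ⟨hb, le_rfl⟩ le_rfl)
  refine (measurable_ereal_toReal.comp_aemeasurable (hg.measurable.comp_aemeasurable hh)).congr ?_
  filter_upwards [hs] with a ha
  simp [hgh a ha]

namespace Copula

lemma measurableSet_Isq : MeasurableSet Isq := measurableSet_Icc.prod measurableSet_Icc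

variable {d : ℕ} {φ : ℝ → ℝ} {Dom : Set ℝ} {c : (Fin d → ℝ) → ℝ × ℝ → ℝ} {θ θT : Fin d → ℝ}

lemma K2_eq (θ : Fin d → ℝ) (u : ℝ × ℝ) :
    K2 φ c θ u = deriv φ (1 / c θ u) * (1 / c θ u) - φ (1 / c θ u) := by
  rw [K2, div_eq_mul_one_div]

lemma bregmanDiv_mul_eq {u : ℝ × ℝ} (hcT : c θT u ≠ 0) :
    bregmanDiv φ (1 / c θ u) (1 / c θT u) * c θT u
      = φ (1 / c θT u) * c θT u + K2 φ c θ u * c θT u - K1 φ c θ u := by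
  rw [K2_eq, K1, bregmanDiv]
  field_simp
  ring

lemma integrableOn_K2_mul (hcT : IntegrableOn (c θT) Isq)
    (hm : IntegrableOn (fun u => mFun φ c θ u * c θT u) Isq) :
    IntegrableOn (fun u => K2 φ c θ u * c θT u) Isq := by
  have h : (fun u => K2 φ c θ u * c θT u)
      = fun u => (∫ v in Isq, K1 φ c θ v) * c θT u - mFun φ c θ u * c θT u := by
    funext u; rw [mFun]; ring
  rw [h]
  exact (hcT.const_mul _).sub hm

lemma integral_mFun_mul (hcT : IntegrableOn (c θT) Isq) (hone : ∫ u in Isq, c θT u = 1)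
    (hm : IntegrableOn (fun u => mFun φ c θ u * c θT u) Isq) :
    ∫ u in Isq, mFun φ c θ u * c θT u
      = (∫ v in Isq, K1 φ c θ v) - ∫ u in Isq, K2 φ c θ u * c θT u := by
  have h : (fun u => mFun φ c θ u * c θT u)
      = fun u => (∫ v in Isq, K1 φ c θ v) * c θT u - K2 φ c θ u * c θT u := by
    funext u; rw [mFun]; ring
  rw [h, integral_sub (hcT.const_mul _) (integrableOn_K2_mul hcT hm), integral_const_mul, hone,
    mul_one]

lemma aemeasurable_K2 (hcT0 : ∀ u ∈ Isq, c θT u ≠ 0) (hcT : IntegrableOn (c θT) Isq)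
    (hm : IntegrableOn (fun u => mFun φ c θ u * c θT u) Isq) :
    AEMeasurable (K2 φ c θ) (volume.restrict Isq) := by
  refine ((integrableOn_K2_mul hcT hm).aemeasurable.mul hcT.aemeasurable.inv).congr ?_
  filter_upwards [ae_restrict_mem measurableSet_Isq] with u hu
  simp [hcT0 u hu]

/-- The measurability of `K₁ = φ'(1/c_θ)` is not part of `θ ∈ Θ_e`: it is recovered from that
of `K₂`, of which `K₁` is a nondecreasing function. -/
lemma integrableOn_K1 (hφconv : ConvexOn ℝ Dom φ) (hφdiff : DifferentiableOn ℝ φ (interior Dom))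
    (hcpos : ∀ u ∈ Isq, 0 < c θ u)
    (hmem : ∀ᵐ u ∂(volume.restrict Isq), 1 / c θ u ∈ interior Dom)
    (hθ : θ ∈ ThetaE φ c) (hK2 : AEMeasurable (K2 φ c θ) (volume.restrict Isq)) :
    IntegrableOn (K1 φ c θ) Isq := by
  have hK1 : AEMeasurable (K1 φ c θ) (volume.restrict Isq) := by
    refine aemeasurable_of_le_imp_le (s := {u | u ∈ Isq ∧ 1 / c θ u ∈ interior Dom}) ?_ hK2 ?_
    · filter_upwards [ae_restrict_mem measurableSet_Isq, hmem]
        with u hu hu' using ⟨hu, hu'⟩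
    · rintro a ⟨-, ha⟩ b ⟨hb, hb'⟩ hab
      rw [K2_eq, K2_eq] at hab
      refine deriv_le_deriv_of_legendre_le ?_ (one_div_pos.mpr (hcpos b hb)) hab
      exact hφconv.bregmanDiv_nonneg (interior_subset ha) (interior_subset hb')
        (hφdiff.differentiableAt (isOpen_interior.mem_nhds ha))
  exact (integrable_norm_iff hK1.aestronglyMeasurable).mp hθ

lemma integrableOn_bregmanDiv_mul (hcT : ∀ u ∈ Isq, c θT u ≠ 0)
    (hK1 : IntegrableOn (K1 φ c θ) Isq) (hK2 : IntegrableOn (fun u => K2 φ c θ u * c θT u) Isq)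
    (hD : IntegrableOn (fun u => φ (1 / c θT u) * c θT u) Isq) :
    IntegrableOn (fun u => bregmanDiv φ (1 / c θ u) (1 / c θT u) * c θT u) Isq :=
  ((hD.add hK2).sub hK1).congr_fun (fun u hu => (bregmanDiv_mul_eq (hcT u hu)).symm)
    measurableSet_Isq

lemma integral_bregmanDiv_mul (hcT0 : ∀ u ∈ Isq, c θT u ≠ 0) (hcT : IntegrableOn (c θT) Isq)
    (hone : ∫ u in Isq, c θT u = 1) (hK1 : IntegrableOn (K1 φ c θ) Isq)
    (hm : IntegrableOn (fun u => mFun φ c θ u * c θT u) Isq)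
    (hD : IntegrableOn (fun u => φ (1 / c θT u) * c θT u) Isq) :
    ∫ u in Isq, bregmanDiv φ (1 / c θ u) (1 / c θT u) * c θT u
      = (∫ u in Isq, φ (1 / c θT u) * c θT u) - ∫ u in Isq, mFun φ c θ u * c θT u := by
  have hK2 := integrableOn_K2_mul hcT hm
  rw [setIntegral_congr_fun measurableSet_Isq fun u hu => bregmanDiv_mul_eq (hcT0 u hu),
    integral_sub (by exact hD.add hK2) hK1, integral_add hD hK2, integral_mFun_mul hcT hone hm]
  ring

lemma ae_bregmanDiv_mul_nonneg (hφconv : ConvexOn ℝ Dom φ)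
    (hφdiff : DifferentiableOn ℝ φ (interior Dom)) (hcT : ∀ u ∈ Isq, 0 < c θT u)
    (hmem : ∀ᵐ u ∂(volume.restrict Isq), 1 / c θ u ∈ interior Dom)
    (hmemT : ∀ᵐ u ∂(volume.restrict Isq), 1 / c θT u ∈ interior Dom) :
    0 ≤ᵐ[volume.restrict Isq] fun u => bregmanDiv φ (1 / c θ u) (1 / c θT u) * c θT u := by
  filter_upwards [ae_restrict_mem measurableSet_Isq, hmem, hmemT] with u hu hx hy
  exact mul_nonneg (hφconv.bregmanDiv_nonneg (interior_subset hx) (interior_subset hy)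
    (hφdiff.differentiableAt (isOpen_interior.mem_nhds hx))) (hcT u hu).le

lemma bregmanDiv_mul_ae_eq_zero_iff (hφsc : StrictConvexOn ℝ (interior Dom) φ)
    (hφdiff : DifferentiableOn ℝ φ (interior Dom)) (hcT : ∀ u ∈ Isq, 0 < c θT u)
    (hmem : ∀ᵐ u ∂(volume.restrict Isq), 1 / c θ u ∈ interior Dom)
    (hmemT : ∀ᵐ u ∂(volume.restrict Isq), 1 / c θT u ∈ interior Dom) :
    (fun u => bregmanDiv φ (1 / c θ u) (1 / c θT u) * c θT u) =ᵐ[volume.restrict Isq] 0 ↔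
      ∀ᵐ u ∂(volume.restrict Isq), c θ u = c θT u := by
  constructor
  · intro hzero
    filter_upwards [hzero, ae_restrict_mem measurableSet_Isq, hmem, hmemT] with u hu0 hu hx hy
    by_contra hne
    have hpos := hφsc.bregmanDiv_pos hx hy (fun h => hne (by simpa using h))
      (hφdiff.differentiableAt (isOpen_interior.mem_nhds hx))
    exact (mul_pos hpos (hcT u hu)).ne' hu0
  · intro hc
    filter_upwards [hc] with u hu
    simp [hu]

end Copula

open Copula in
theorem statement_11_general
    {d : ℕ}
    -- the convex function φ, nonnegative with φ(1)=0, differentiable on the interior of its domain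
    (φ : ℝ → ℝ) (Dom : Set ℝ) (hφconv : ConvexOn ℝ Dom φ)
    (hφdiff : DifferentiableOn ℝ φ (interior Dom))
    -- the parametric family of copula densities: positive, with uniform margins
    (c : (Fin d → ℝ) → ℝ × ℝ → ℝ) (hcpos : ∀ θ, ∀ u ∈ Isq, 0 < c θ u)
    (hmarg : ∀ θ, ∀ t ∈ Icc (0:ℝ) 1, copCdf c θ (t, 1) = t ∧ copCdf c θ (1, t) = t)
    (θT : Fin d → ℝ) (hθT : θT ∈ ThetaE φ c)
    -- 1/c_θ and 1/c_{θ_T} take values in the interior of the domain of φ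
    (hmem : ∀ θ ∈ ThetaE φ c, ∀ᵐ u ∂(volume.restrict Isq), 1 / c θ u ∈ interior Dom)
    -- all integrals involved are finite
    (hint : ∀ θ ∈ ThetaE φ c, IntegrableOn (fun u => mFun φ c θ u * c θT u) Isq volume)
    (hintD : IntegrableOn (fun u => φ (1 / c θT u) * c θT u) Isq volume) :
    -- ∫ m(θ,·) dC_{θ_T} ≤ D_φ(θ₀,θ_T), with equality at θ = θ_T; the sup over Θ_e is
    -- attained at θ_T; under strict convexity equality holds iff c_θ = c_{θ_T} a.e.
    (∀ θ ∈ ThetaE φ c,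
      (∫ u in Isq, mFun φ c θ u * c θT u) ≤ ∫ u in Isq, φ (1 / c θT u) * c θT u) ∧
    ((∫ u in Isq, mFun φ c θT u * c θT u) = ∫ u in Isq, φ (1 / c θT u) * c θT u) ∧
    IsGreatest {x : ℝ | ∃ θ ∈ ThetaE φ c, x = ∫ u in Isq, mFun φ c θ u * c θT u}
      (∫ u in Isq, φ (1 / c θT u) * c θT u) ∧
    (StrictConvexOn ℝ (interior Dom) φ →
      ∀ θ ∈ ThetaE φ c,
        ((∫ u in Isq, mFun φ c θ u * c θT u) = (∫ u in Isq, φ (1 / c θT u) * c θT u) ↔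
          ∀ᵐ u ∂(volume.restrict Isq), c θ u = c θT u)) := by
  have hcT0 : ∀ u ∈ Isq, c θT u ≠ 0 := fun u hu => (hcpos θT u hu).ne'
  have hone : ∫ u in Isq, c θT u = 1 := by
    simpa [copCdf, Isq] using (hmarg θT 1 ⟨zero_le_one, le_rfl⟩).1
  have hcT : IntegrableOn (c θT) Isq := Integrable.of_integral_ne_zero (by simp [hone])
  have hK1 : ∀ θ ∈ ThetaE φ c, IntegrableOn (K1 φ c θ) Isq := fun θ hθ =>
    integrableOn_K1 hφconv hφdiff (hcpos θ) (hmem θ hθ) hθ (aemeasurable_K2 hcT0 hcT (hint θ hθ))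
  have hgap : ∀ θ ∈ ThetaE φ c, ∫ u in Isq, bregmanDiv φ (1 / c θ u) (1 / c θT u) * c θT u
      = (∫ u in Isq, φ (1 / c θT u) * c θT u) - ∫ u in Isq, mFun φ c θ u * c θT u :=
    fun θ hθ => integral_bregmanDiv_mul hcT0 hcT hone (hK1 θ hθ) (hint θ hθ) hintD
  have hnonneg : ∀ θ ∈ ThetaE φ c,
      0 ≤ᵐ[volume.restrict Isq] fun u => bregmanDiv φ (1 / c θ u) (1 / c θT u) * c θT u :=
    fun θ hθ => ae_bregmanDiv_mul_nonneg hφconv hφdiff (hcpos θT) (hmem θ hθ) (hmem θT hθT)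
  have hle : ∀ θ ∈ ThetaE φ c,
      (∫ u in Isq, mFun φ c θ u * c θT u) ≤ ∫ u in Isq, φ (1 / c θT u) * c θT u :=
    fun θ hθ => sub_nonneg.mp (hgap θ hθ ▸ integral_nonneg_of_ae (hnonneg θ hθ))
  have heqT : (∫ u in Isq, mFun φ c θT u * c θT u) = ∫ u in Isq, φ (1 / c θT u) * c θT u :=
    (sub_eq_zero.mp (by simpa using (hgap θT hθT).symm)).symm
  refine ⟨hle, heqT, ⟨⟨θT, hθT, heqT.symm⟩, fun x ⟨θ, hθ, hx⟩ => hx ▸ hle θ hθ⟩, ?_⟩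
  intro hφsc θ hθ
  rw [eq_comm, ← sub_eq_zero, ← hgap θ hθ, integral_eq_zero_iff_of_nonneg_ae (hnonneg θ hθ)
    (integrableOn_bregmanDiv_mul hcT0 (hK1 θ hθ)
      (integrableOn_K2_mul hcT (hint θ hθ)) hintD)]
  exact bregmanDiv_mul_ae_eq_zero_iff hφsc hφdiff (hcpos θT) (hmem θ hθ) (hmem θT hθT)

open Copula in
theorem statement_11
    {d : ℕ}
    -- the convex function φ, nonnegative with φ(1)=0, differentiable on the interior of its domain
    (φ : ℝ → ℝ) (Dom : Set ℝ) (hDomConv : Convex ℝ Dom) (h1Dom : 1 ∈ interior Dom)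
    (hφ1 : φ 1 = 0) (hφnonneg : ∀ x ∈ Dom, 0 ≤ φ x) (hφconv : ConvexOn ℝ Dom φ)
    (hφdiff : DifferentiableOn ℝ φ (interior Dom))
    -- the parametric family of copula densities: positive, with uniform margins
    (c : (Fin d → ℝ) → ℝ × ℝ → ℝ) (hcpos : ∀ θ, ∀ u ∈ Isq, 0 < c θ u)
    (hmarg : ∀ θ, ∀ t ∈ Icc (0:ℝ) 1, copCdf c θ (t, 1) = t ∧ copCdf c θ (1, t) = t)
    (θT : Fin d → ℝ) (hθT : θT ∈ ThetaE φ c)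
    -- 1/c_θ and 1/c_{θ_T} take values in the interior of the domain of φ
    (hmem : ∀ θ ∈ ThetaE φ c, ∀ᵐ u ∂(volume.restrict Isq), 1 / c θ u ∈ interior Dom)
    (hmemT : ∀ᵐ u ∂(volume.restrict Isq), 1 / c θT u ∈ interior Dom)
    -- all integrals involved are finite
    (hint : ∀ θ ∈ ThetaE φ c, IntegrableOn (fun u => mFun φ c θ u * c θT u) Isq volume)
    (hintD : IntegrableOn (fun u => φ (1 / c θT u) * c θT u) Isq volume) :
    -- ∫ m(θ,·) dC_{θ_T} ≤ D_φ(θ₀,θ_T), with equality at θ = θ_T; the sup over Θ_e is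
    -- attained at θ_T; under strict convexity equality holds iff c_θ = c_{θ_T} a.e.
    (∀ θ ∈ ThetaE φ c,
      (∫ u in Isq, mFun φ c θ u * c θT u) ≤ ∫ u in Isq, φ (1 / c θT u) * c θT u) ∧
    ((∫ u in Isq, mFun φ c θT u * c θT u) = ∫ u in Isq, φ (1 / c θT u) * c θT u) ∧
    IsGreatest {x : ℝ | ∃ θ ∈ ThetaE φ c, x = ∫ u in Isq, mFun φ c θ u * c θT u}
      (∫ u in Isq, φ (1 / c θT u) * c θT u) ∧
    (StrictConvexOn ℝ (interior Dom) φ →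
      ∀ θ ∈ ThetaE φ c,
        ((∫ u in Isq, mFun φ c θ u * c θT u) = (∫ u in Isq, φ (1 / c θT u) * c θT u) ↔
          ∀ᵐ u ∂(volume.restrict Isq), c θ u = c θT u)) :=
  statement_11_general φ Dom hφconv hφdiff c hcpos hmarg θT hθT hmem hint hintD
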